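/- Consider the bowtie game G_⋈ under first-price poorman bidding, with Max's initial budget B > 0 and Min's initial budget drawn from a finite budget distribution γ with support {C_1 < … < C_n}. For every ε > 0, Min has a collection of strategies (g_j ∈ S_Min(C_j))_{1≤j≤n} such that for every Max strategy f ∈ S_Max(B), Σ_{j=1}^{n} γ(C_j)·payoff(f, g_j) < Pot(B, γ) + ε. -/

import Mathlib

open Filter Finset

noncomputable section

/-- A history of the bowtie game: the list of rounds played so far; each round
records the vertex at which the bidding took place (`true` is the vertex `u`
of weight 1, `false` is the vertex `v` of weight 0), Max's bid and Min's bid. -/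
abbrev Hist : Type := List (Bool × ℝ × ℝ)

/-- A pure strategy: given the history and the current vertex, produce a bid and
the vertex to move to upon winning the bidding. -/
abbrev Strat : Type := Hist → Bool → ℝ × Bool

/-- One bidding round: both players bid; the higher bidder moves the token
(ties are resolved in favor of Min). -/
def step (f g : Strat) (hv : Hist × Bool) : Hist × Bool :=
  (hv.1 ++ [(hv.2, (f hv.1 hv.2).1, (g hv.1 hv.2).1)],
    if (g hv.1 hv.2).1 < (f hv.1 hv.2).1 then (f hv.1 hv.2).2 else (g hv.1 hv.2).2)

/-- The history and current vertex after `n` rounds of the play induced by the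
Max strategy `f` and the Min strategy `g` from the initial vertex `v0`. -/
def hist (f g : Strat) (v0 : Bool) : ℕ → Hist × Bool
  | 0 => ([], v0)
  | n + 1 => step f g (hist f g v0 n)

/-- The vertex visited at time `n` in the play induced by `f` and `g` from `v0`. -/
def vtx (f g : Strat) (v0 : Bool) (n : ℕ) : Bool := (hist f g v0 n).2

/-- The weights of the bowtie game: `w(u) = 1`, `w(v) = 0`. -/
def wt (b : Bool) : ℝ := if b then 1 else 0

/-- The mean-payoff of the play induced by `f` and `g` from `v0`:
`liminf` of the average weight seen in the first `n` rounds. -/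
def payoff (f g : Strat) (v0 : Bool) : ℝ :=
  Filter.liminf (fun n : ℕ => (∑ i ∈ Finset.range n, wt (vtx f g v0 i)) / n) Filter.atTop

/-- First-price bidding: only the winner pays.  Max's total investment along a
history (the sum of his winning bids; ties are won by Min). -/
def fpMaxSpent (h : Hist) : ℝ := (h.map fun r => if r.2.2 < r.2.1 then r.2.1 else 0).sum

/-- Min's total investment along a history under first-price bidding. -/
def fpMinSpent (h : Hist) : ℝ := (h.map fun r => if r.2.2 < r.2.1 then 0 else r.2.2).sum

/-- `f ∈ S_Max(B)` under first-price poorman bidding: along any play consistent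
with `f`, all prescribed bids are nonnegative and do not exceed the remaining
budget of Max when his initial budget is `B`. -/
def fpMaxLegal (f : Strat) (B : ℝ) : Prop :=
  ∀ g : Strat, ∀ v0 : Bool, ∀ n : ℕ,
    0 ≤ (f (hist f g v0 n).1 (hist f g v0 n).2).1 ∧
    (f (hist f g v0 n).1 (hist f g v0 n).2).1 ≤ B - fpMaxSpent (hist f g v0 n).1

/-- `g ∈ S_Min(C)` under first-price poorman bidding. -/
def fpMinLegal (g : Strat) (C : ℝ) : Prop :=
  ∀ f : Strat, ∀ v0 : Bool, ∀ n : ℕ,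
    0 ≤ (g (hist f g v0 n).1 (hist f g v0 n).2).1 ∧
    (g (hist f g v0 n).1 (hist f g v0 n).2).1 ≤ C - fpMinSpent (hist f g v0 n).1

/-- The potential `Pot(B, γ) = ∑_{j=1}^n γ(C_j) · B/(B + C_j)`. -/
def Pot (B : ℝ) (n : ℕ) (w C : ℕ → ℝ) : ℝ :=
  ∑ j ∈ Finset.Icc 1 n, w j * (B / (B + C j))

/-!
Fix `θ > B / (B + C)`. Min always moves to the weight-0 vertex and bids `κ · 2^(-G)`, where `G`
counts the times so far at which the average weight was at most `θ`. While the average stays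
above `θ`, Max has to win a `θ`-fraction of the rounds, each costing him more than Min's
(constant) bid, while Min pays her bid in the remaining rounds. Hence the potential
`θ · (Min's spending) - (1 - θ) · (Max's spending)` stays below `2κ`, and since
`(1 - θ) B < θ C` Min never runs short of budget. If the average stayed above `θ` forever, the
bid would eventually be constant and the players would together pay at least that much in every
round, which their budgets `B + C` forbid. So the average drops to `θ` infinitely often and the
mean payoff is at most `θ`; averaging over `γ` with `θ = B / (B + C_j) + ε / 2` gives the bound.
-/

def weightSum (h : Hist) : ℝ := (h.map fun r => wt r.1).sum

def goodPrefixCount (θ : ℝ) (h : Hist) : ℕ :=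
  #{t ∈ range (h.length + 1) | weightSum (h.take t) ≤ θ * t}

/-- The cap at half the remaining budget makes legality evident; against a legal Max it is never
reached (`minBid_halvingStrat`). -/
def halvingStrat (κ C θ : ℝ) : Strat :=
  fun h _ => (min (κ * (1 / 2) ^ goodPrefixCount θ h) ((C - fpMinSpent h) / 2), false)

lemma wt_nonneg (b : Bool) : 0 ≤ wt b := by unfold wt; split <;> norm_num

lemma wt_le_one (b : Bool) : wt b ≤ 1 := by unfold wt; split <;> norm_num

section Play

variable (f g : Strat) (v0 : Bool)

def maxBid (k : ℕ) : ℝ := (f (hist f g v0 k).1 (hist f g v0 k).2).1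

def minBid (k : ℕ) : ℝ := (g (hist f g v0 k).1 (hist f g v0 k).2).1

def weightTotal (k : ℕ) : ℝ := ∑ i ∈ range k, wt (vtx f g v0 i)

def goodCount (θ : ℝ) (k : ℕ) : ℕ := #{t ∈ range (k + 1) | weightTotal f g v0 t ≤ θ * t}

variable {f g v0}

lemma fst_hist_succ (k : ℕ) :
    (hist f g v0 (k + 1)).1 =
      (hist f g v0 k).1 ++ [(vtx f g v0 k, maxBid f g v0 k, minBid f g v0 k)] := rfl

lemma vtx_succ (k : ℕ) :
    vtx f g v0 (k + 1) = if minBid f g v0 k < maxBid f g v0 k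
      then (f (hist f g v0 k).1 (vtx f g v0 k)).2 else (g (hist f g v0 k).1 (vtx f g v0 k)).2 :=
  rfl

lemma length_fst_hist (k : ℕ) : (hist f g v0 k).1.length = k := by
  induction k with
  | zero => rfl
  | succ k ih => simp [fst_hist_succ, ih]

lemma take_fst_hist {t k : ℕ} (htk : t ≤ k) : (hist f g v0 k).1.take t = (hist f g v0 t).1 := by
  induction k, htk using Nat.le_induction with
  | base => simp [length_fst_hist]
  | succ k htk ih =>
    rw [fst_hist_succ, List.take_append_of_le_length (by rw [length_fst_hist]; exact htk), ih]

lemma weightSum_fst_hist (k : ℕ) : weightSum (hist f g v0 k).1 = weightTotal f g v0 k := by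
  induction k with
  | zero => simp [weightSum, weightTotal, hist]
  | succ k ih =>
    rw [weightTotal, sum_range_succ, ← weightTotal, ← ih, fst_hist_succ]
    simp [weightSum]

lemma goodPrefixCount_fst_hist (θ : ℝ) (k : ℕ) :
    goodPrefixCount θ (hist f g v0 k).1 = goodCount f g v0 θ k := by
  rw [goodPrefixCount, goodCount, length_fst_hist]
  congr 1
  refine filter_congr fun t ht => ?_
  rw [take_fst_hist (Nat.lt_succ_iff.mp (mem_range.mp ht)), weightSum_fst_hist]

lemma goodCount_succ (θ : ℝ) (k : ℕ) :
    goodCount f g v0 θ (k + 1) = goodCount f g v0 θ k +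
      if weightTotal f g v0 (k + 1) ≤ θ * ↑(k + 1) then 1 else 0 := by
  rw [goodCount, goodCount, range_add_one, filter_insert]
  split <;> simp [*]

lemma weightTotal_succ (k : ℕ) :
    weightTotal f g v0 (k + 1) = weightTotal f g v0 k + wt (vtx f g v0 k) :=
  sum_range_succ _ _

lemma fpMinSpent_succ (k : ℕ) :
    fpMinSpent (hist f g v0 (k + 1)).1 = fpMinSpent (hist f g v0 k).1 +
      if minBid f g v0 k < maxBid f g v0 k then 0 else minBid f g v0 k := by
  simp [fpMinSpent, fst_hist_succ]

lemma fpMaxSpent_succ (k : ℕ) :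
    fpMaxSpent (hist f g v0 (k + 1)).1 = fpMaxSpent (hist f g v0 k).1 +
      if minBid f g v0 k < maxBid f g v0 k then maxBid f g v0 k else 0 := by
  simp [fpMaxSpent, fst_hist_succ]

/-- Whoever wins a round pays at least Min's bid. -/
lemma sum_minBid_le_spent (k : ℕ) :
    ∑ i ∈ range k, minBid f g v0 i ≤
      fpMinSpent (hist f g v0 k).1 + fpMaxSpent (hist f g v0 k).1 := by
  induction k with
  | zero => simp [fpMinSpent, fpMaxSpent, hist]
  | succ k ih =>
    rw [sum_range_succ, fpMinSpent_succ, fpMaxSpent_succ]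
    split <;> linarith

lemma fpMaxSpent_le_of_legal {B : ℝ} (hf : fpMaxLegal f B) (k : ℕ) :
    fpMaxSpent (hist f g v0 k).1 ≤ B := by
  linarith [hf g v0 k]

lemma payoff_le_of_frequently {θ : ℝ} (hθ : 0 ≤ θ)
    (h : ∃ᶠ k in atTop, weightTotal f g v0 k ≤ θ * k) : payoff f g v0 ≤ θ := by
  refine liminf_le_of_frequently_le (h.mono fun k hgood => ?_)
    (isBoundedUnder_of ⟨0, fun k =>
      div_nonneg (sum_nonneg fun i _ => wt_nonneg _) k.cast_nonneg⟩)
  rcases k.eq_zero_or_pos with rfl | hk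
  · simpa using hθ
  · exact (div_le_iff₀ (by exact_mod_cast hk)).mpr hgood

end Play

section HalvingStrat

variable {κ C θ : ℝ} {f : Strat} {v0 : Bool}

lemma minBid_halvingStrat_eq_min (k : ℕ) :
    minBid f (halvingStrat κ C θ) v0 k =
      min (κ * (1 / 2) ^ goodCount f (halvingStrat κ C θ) v0 θ k)
        ((C - fpMinSpent (hist f (halvingStrat κ C θ) v0 k).1) / 2) := by
  rw [minBid, halvingStrat, goodPrefixCount_fst_hist]

lemma minBid_halvingStrat_le_half (k : ℕ) :
    minBid f (halvingStrat κ C θ) v0 k ≤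
      (C - fpMinSpent (hist f (halvingStrat κ C θ) v0 k).1) / 2 :=
  (minBid_halvingStrat_eq_min k).trans_le (min_le_right _ _)

lemma fpMinSpent_halvingStrat_le (hC : 0 ≤ C) (k : ℕ) :
    fpMinSpent (hist f (halvingStrat κ C θ) v0 k).1 ≤ C := by
  induction k with
  | zero => simpa [fpMinSpent, hist] using hC
  | succ k ih =>
    have hcap := minBid_halvingStrat_le_half (f := f) (v0 := v0) (κ := κ) (C := C) (θ := θ) k
    rw [fpMinSpent_succ]
    split <;> linarith

lemma halvingStrat_legal (hC : 0 ≤ C) (hκ : 0 ≤ κ) : fpMinLegal (halvingStrat κ C θ) C := by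
  intro f v0 k
  change 0 ≤ minBid f _ v0 k ∧ minBid f _ v0 k ≤ C - fpMinSpent _
  have hS := fpMinSpent_halvingStrat_le (f := f) (v0 := v0) (κ := κ) (θ := θ) hC k
  refine ⟨?_, (minBid_halvingStrat_le_half k).trans (by linarith)⟩
  rw [minBid_halvingStrat_eq_min]
  exact le_min (by positivity) (by linarith)

end HalvingStrat

def nominalBid (κ C θ : ℝ) (f : Strat) (v0 : Bool) (k : ℕ) : ℝ :=
  κ * (1 / 2) ^ goodCount f (halvingStrat κ C θ) v0 θ k

def potential (κ C θ : ℝ) (f : Strat) (v0 : Bool) (k : ℕ) : ℝ :=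
  θ * fpMinSpent (hist f (halvingStrat κ C θ) v0 k).1 -
    (1 - θ) * fpMaxSpent (hist f (halvingStrat κ C θ) v0 k).1

/-- While the average weight stays above `θ` the nominal bid is constant, and the potential plus
the bid times the excess weight does not increase: only a round won by Max, which costs him more
than the bid, can add weight. -/
def SpendingInvariant (κ C θ : ℝ) (f : Strat) (v0 : Bool) (k : ℕ) : Prop :=
  (weightTotal f (halvingStrat κ C θ) v0 k ≤ θ * k →
      potential κ C θ f v0 k ≤ 2 * κ - 4 * nominalBid κ C θ f v0 k) ∧
    (θ * k < weightTotal f (halvingStrat κ C θ) v0 k →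
      potential κ C θ f v0 k +
          nominalBid κ C θ f v0 k * (weightTotal f (halvingStrat κ C θ) v0 (k + 1) - θ * k) ≤
        2 * κ - 3 * nominalBid κ C θ f v0 k)

section Invariant

variable {B κ C θ : ℝ} {f : Strat} {v0 : Bool} {k : ℕ}

lemma nominalBid_nonneg (hκ : 0 ≤ κ) : 0 ≤ nominalBid κ C θ f v0 k := by
  unfold nominalBid; positivity

lemma nominalBid_succ :
    nominalBid κ C θ f v0 (k + 1) =
      if weightTotal f (halvingStrat κ C θ) v0 (k + 1) ≤ θ * ↑(k + 1)
      then nominalBid κ C θ f v0 k / 2 else nominalBid κ C θ f v0 k := by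
  unfold nominalBid
  rw [goodCount_succ]
  split_ifs <;> ring

lemma minBid_eq_nominalBid (hθ0 : 0 < θ) (hθ1 : θ ≤ 1) (hκ0 : 0 ≤ κ)
    (hκ : (1 - θ) * B + 2 * κ ≤ θ * C) (hf : fpMaxLegal f B)
    (hΦ : potential κ C θ f v0 k ≤ 2 * κ - 3 * nominalBid κ C θ f v0 k) :
    minBid f (halvingStrat κ C θ) v0 k = nominalBid κ C θ f v0 k := by
  have hb := nominalBid_nonneg (C := C) (θ := θ) (f := f) (v0 := v0) (k := k) hκ0
  have hX := mul_le_mul_of_nonneg_left (fpMaxSpent_le_of_legal (g := halvingStrat κ C θ)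
    (v0 := v0) hf k) (sub_nonneg.2 hθ1)
  unfold potential at hΦ
  have hroom : 3 * nominalBid κ C θ f v0 k ≤
      θ * (C - fpMinSpent (hist f (halvingStrat κ C θ) v0 k).1) := by linarith
  refine (minBid_halvingStrat_eq_min k).trans (min_eq_left ?_)
  change nominalBid κ C θ f v0 k ≤ _
  nlinarith

lemma potential_succ_le (hθ1 : θ ≤ 1) (hκ0 : 0 ≤ κ)
    (hM : minBid f (halvingStrat κ C θ) v0 k = nominalBid κ C θ f v0 k) :
    potential κ C θ f v0 (k + 1) ≤ potential κ C θ f v0 k +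
      nominalBid κ C θ f v0 k * (θ - wt (vtx f (halvingStrat κ C θ) v0 (k + 1))) := by
  have hb := nominalBid_nonneg (C := C) (θ := θ) (f := f) (v0 := v0) (k := k) hκ0
  unfold potential
  rw [fpMinSpent_succ, fpMaxSpent_succ, vtx_succ]
  by_cases hwin : minBid f (halvingStrat κ C θ) v0 k < maxBid f (halvingStrat κ C θ) v0 k
  · simp only [if_pos hwin]
    rw [hM] at hwin
    have hw := wt_le_one
      (f (hist f (halvingStrat κ C θ) v0 k).1 (vtx f (halvingStrat κ C θ) v0 k)).2
    nlinarith [mul_nonneg (sub_nonneg.2 hθ1) (sub_nonneg.2 hwin.le),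
      mul_nonneg hb (sub_nonneg.2 hw)]
  · rw [hM] at hwin ⊢
    simp only [if_neg hwin, halvingStrat, wt, Bool.false_eq_true, if_false]
    linarith

lemma SpendingInvariant.potential_le (hκ0 : 0 ≤ κ) (h : SpendingInvariant κ C θ f v0 k) :
    potential κ C θ f v0 k ≤ 2 * κ - 3 * nominalBid κ C θ f v0 k := by
  have hb := nominalBid_nonneg (C := C) (θ := θ) (f := f) (v0 := v0) (k := k) hκ0
  by_cases hgood : weightTotal f (halvingStrat κ C θ) v0 k ≤ θ * k
  · linarith [h.1 hgood]
  · rw [not_le] at hgood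
    have hexcess : 0 ≤ weightTotal f (halvingStrat κ C θ) v0 (k + 1) - θ * k := by
      rw [weightTotal_succ]; linarith [wt_nonneg (vtx f (halvingStrat κ C θ) v0 k)]
    nlinarith [h.2 hgood, mul_nonneg hb hexcess]

lemma spendingInvariant_zero : SpendingInvariant κ C θ f v0 0 := by
  refine ⟨fun _ => ?_, fun h => by simp [weightTotal] at h⟩
  simp [potential, nominalBid, goodCount, weightTotal, hist, fpMinSpent, fpMaxSpent,
    filter_singleton]
  linarith

lemma SpendingInvariant.succ (hθ0 : 0 < θ) (hθ1 : θ ≤ 1) (hκ0 : 0 ≤ κ)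
    (hκ : (1 - θ) * B + 2 * κ ≤ θ * C) (hf : fpMaxLegal f B)
    (h : SpendingInvariant κ C θ f v0 k) : SpendingInvariant κ C θ f v0 (k + 1) := by
  have hb := nominalBid_nonneg (C := C) (θ := θ) (f := f) (v0 := v0) (k := k) hκ0
  have hΦ := h.potential_le hκ0
  have hstep := potential_succ_le hθ1 hκ0 (minBid_eq_nominalBid hθ0 hθ1 hκ0 hκ hf hΦ)
  have hw0 := wt_nonneg (vtx f (halvingStrat κ C θ) v0 (k + 1))
  unfold SpendingInvariant
  rw [nominalBid_succ]
  split_ifs with hgood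
  · refine ⟨fun _ => ?_, fun hbad => absurd hgood (not_le.2 hbad)⟩
    nlinarith [mul_nonneg hb hw0, mul_nonneg hb (sub_nonneg.2 hθ1)]
  · refine ⟨fun h' => absurd h' hgood, fun _ => ?_⟩
    have hprev : potential κ C θ f v0 k + nominalBid κ C θ f v0 k *
        (weightTotal f (halvingStrat κ C θ) v0 (k + 1) - θ * k) ≤
        2 * κ - 3 * nominalBid κ C θ f v0 k := by
      by_cases hk : weightTotal f (halvingStrat κ C θ) v0 k ≤ θ * k
      · have hexcess : weightTotal f (halvingStrat κ C θ) v0 (k + 1) - θ * k ≤ 1 := by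
          rw [weightTotal_succ]; linarith [wt_le_one (vtx f (halvingStrat κ C θ) v0 k)]
        nlinarith [h.1 hk, mul_le_mul_of_nonneg_left hexcess hb]
      · exact h.2 (not_le.1 hk)
    rw [weightTotal_succ (k + 1)]
    push_cast
    linear_combination hstep + hprev

lemma spendingInvariant (hθ0 : 0 < θ) (hθ1 : θ ≤ 1) (hκ0 : 0 ≤ κ)
    (hκ : (1 - θ) * B + 2 * κ ≤ θ * C) (hf : fpMaxLegal f B) (k : ℕ) :
    SpendingInvariant κ C θ f v0 k := by
  induction k with
  | zero => exact spendingInvariant_zero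
  | succ k ih => exact ih.succ hθ0 hθ1 hκ0 hκ hf

lemma minBid_halvingStrat (hθ0 : 0 < θ) (hθ1 : θ ≤ 1) (hκ0 : 0 ≤ κ)
    (hκ : (1 - θ) * B + 2 * κ ≤ θ * C) (hf : fpMaxLegal f B) (k : ℕ) :
    minBid f (halvingStrat κ C θ) v0 k = nominalBid κ C θ f v0 k :=
  minBid_eq_nominalBid hθ0 hθ1 hκ0 hκ hf
    ((spendingInvariant hθ0 hθ1 hκ0 hκ hf k).potential_le hκ0)

end Invariant

section Payoff

variable {B κ C θ : ℝ} {f : Strat} {v0 : Bool}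

lemma frequently_weightTotal_le (hθ0 : 0 < θ) (hθ1 : θ ≤ 1) (hκ0 : 0 < κ)
    (hκ : (1 - θ) * B + 2 * κ ≤ θ * C) (hf : fpMaxLegal f B) :
    ∃ᶠ k in atTop, weightTotal f (halvingStrat κ C θ) v0 k ≤ θ * k := by
  have hB : 0 ≤ B := by
    simpa [hist, fpMaxSpent] using
      fpMaxSpent_le_of_legal (g := halvingStrat κ C θ) (v0 := v0) hf 0
  have hC : 0 ≤ C := by nlinarith
  rw [frequently_atTop]
  intro N
  by_contra! hbad
  have hbid : ∀ i, κ * (1 / 2) ^ N ≤ minBid f (halvingStrat κ C θ) v0 i := by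
    intro i
    have hcount : goodCount f (halvingStrat κ C θ) v0 θ i ≤ N := by
      refine (card_le_card fun t ht => ?_).trans (card_range N).le
      rw [mem_filter] at ht
      exact mem_range.2 (not_le.1 fun hNt => (hbad t hNt).not_ge ht.2)
    rw [minBid_halvingStrat hθ0 hθ1 hκ0.le hκ hf]
    exact mul_le_mul_of_nonneg_left (pow_le_pow_of_le_one (by norm_num) (by norm_num) hcount)
      hκ0.le
  have hpaid : ∀ k : ℕ, k * (κ * (1 / 2) ^ N) ≤ C + B := fun k => calc
    k * (κ * (1 / 2) ^ N) = ∑ i ∈ range k, κ * (1 / 2) ^ N := by simp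
    _ ≤ ∑ i ∈ range k, minBid f (halvingStrat κ C θ) v0 i := sum_le_sum fun i _ => hbid i
    _ ≤ _ := (sum_minBid_le_spent k).trans (add_le_add (fpMinSpent_halvingStrat_le hC k)
        (fpMaxSpent_le_of_legal hf k))
  obtain ⟨k, hk⟩ := exists_nat_gt ((C + B) / (κ * (1 / 2) ^ N))
  rw [div_lt_iff₀ (by positivity)] at hk
  linarith [hpaid k]

theorem exists_minLegal_payoff_le (hB : 0 < B) (hC : 0 < C) (hθ : B / (B + C) < θ) :
    ∃ g : Strat, fpMinLegal g C ∧ ∀ f : Strat, fpMaxLegal f B → ∀ v0 : Bool,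
      payoff f g v0 ≤ θ := by
  set θ' := min θ 1
  have hθ' : B / (B + C) < θ' := lt_min hθ ((div_lt_one (by linarith)).2 (by linarith))
  have hθ'0 : 0 < θ' := (div_pos hB (by linarith)).trans hθ'
  have hκ0 : 0 < (θ' * C - (1 - θ') * B) / 2 := by
    rw [div_lt_iff₀ (by linarith)] at hθ'
    linarith
  refine ⟨halvingStrat ((θ' * C - (1 - θ') * B) / 2) C θ', halvingStrat_legal hC.le hκ0.le,
    fun f hf v0 => ?_⟩
  exact (payoff_le_of_frequently hθ'0.le (frequently_weightTotal_le hθ'0 (min_le_right _ _) hκ0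
    (by linarith) hf)).trans (min_le_left _ _)

end Payoff

lemma apply_zero_lt_of_pred_lt {α : Type*} [Preorder α] {a : ℕ → α} {n : ℕ}
    (h : ∀ i ∈ Icc 1 n, a (i - 1) < a i) : ∀ j ∈ Icc 1 n, a 0 < a j := by
  intro j hj
  rw [mem_Icc] at hj
  induction j with
  | zero => omega
  | succ j ih =>
    have hstep := h (j + 1) (mem_Icc.2 ⟨by omega, hj.2⟩)
    rcases j.eq_zero_or_pos with rfl | hj0
    · exact hstep
    · exact (ih ⟨hj0, by omega⟩).trans hstep

theorem stmt_9_general (v0 : Bool) (n : ℕ) (B : ℝ) (hB : 0 < B)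
    (C w : ℕ → ℝ) (hC0 : C 0 = 0)
    (hCinc : ∀ i ∈ Finset.Icc 1 n, C (i - 1) < C i)
    (hw : ∀ i ∈ Finset.Icc 1 n, 0 < w i)
    (hwsum : ∑ i ∈ Finset.Icc 1 n, w i = 1) :
    ∀ ε > (0 : ℝ), ∃ g : ℕ → Strat,
      (∀ j ∈ Finset.Icc 1 n, fpMinLegal (g j) (C j)) ∧
      ∀ f : Strat, fpMaxLegal f B →
        ∑ j ∈ Finset.Icc 1 n, w j * payoff f (g j) v0 < Pot B n w C + ε := by
  intro ε hε
  have hstrat : ∀ j ∈ Icc 1 n, ∃ g : Strat, fpMinLegal g (C j) ∧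
      ∀ f : Strat, fpMaxLegal f B → ∀ v0 : Bool, payoff f g v0 ≤ B / (B + C j) + ε / 2 :=
    fun j hj =>
      exists_minLegal_payoff_le hB (hC0 ▸ apply_zero_lt_of_pred_lt hCinc j hj) (by linarith)
  choose! g hg using hstrat
  refine ⟨g, fun j hj => (hg j hj).1, fun f hf => ?_⟩
  calc ∑ j ∈ Icc 1 n, w j * payoff f (g j) v0
      ≤ ∑ j ∈ Icc 1 n, w j * (B / (B + C j) + ε / 2) :=
        sum_le_sum fun j hj => mul_le_mul_of_nonneg_left ((hg j hj).2 f hf v0) (hw j hj).le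
    _ = Pot B n w C + ε / 2 := by
      simp only [Pot, mul_add, sum_add_distrib, ← sum_mul, hwsum, one_mul]
    _ < Pot B n w C + ε := by linarith

/-- upper bound for the fully-informed player, first-price
poorman bidding, bowtie game.  For every `ε > 0` Min has a collection of
legal strategies `(g_j ∈ S_Min(C_j))_j` such that against every legal Max
strategy `f ∈ S_Max(B)` the expected payoff is smaller than `Pot(B, γ) + ε`. -/
theorem stmt_9 (v0 : Bool) (n : ℕ) (hn : 1 ≤ n) (B : ℝ) (hB : 0 < B)
    (C w : ℕ → ℝ) (hC0 : C 0 = 0)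
    (hCinc : ∀ i ∈ Finset.Icc 1 n, C (i - 1) < C i)
    (hw : ∀ i ∈ Finset.Icc 1 n, 0 < w i)
    (hwsum : ∑ i ∈ Finset.Icc 1 n, w i = 1) :
    ∀ ε > (0 : ℝ), ∃ g : ℕ → Strat,
      (∀ j ∈ Finset.Icc 1 n, fpMinLegal (g j) (C j)) ∧
      ∀ f : Strat, fpMaxLegal f B →
        ∑ j ∈ Finset.Icc 1 n, w j * payoff f (g j) v0 < Pot B n w C + ε :=
  stmt_9_general v0 n B hB C w hC0 hCinc hw hwsum

end
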